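/- arXiv:1705.10316 — 5 statements merged into one kernel-verified Lean document; each statement's English description precedes it below -/
import Mathlib

section
/- Let V be a real vector space. A linear map J : gl(V) ⊕ V → gl(V) ⊕ V satisfies J² = −id and ⟨J(x), J(y)⟩ = ⟨x, y⟩ for all x, y (i.e. J is a generalized almost complex structure on the omni-Lie algebra ol(V)) if and only if there exist a linear map D : V → V and an alternating bilinear map π : V × V → V such that D² = −id_V, π(D u, v) = π(u, D v) for all u, v ∈ V, and J(A, u) = (−A∘D + π(u, ·), D(u)) for all A ∈ gl(V) and u ∈ V, where π(u,·) ∈ gl(V) denotes the map v ↦ π(u,v). -/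
/-- The `V`-valued symmetric pairing on the omni-Lie algebra `ol(V) = gl(V) ⊕ V`. -/
noncomputable def olPair {V : Type*} [AddCommGroup V] [Module ℝ V]
    (x y : (V →ₗ[ℝ] V) × V) : V :=
  ((2 : ℝ)⁻¹) • (x.1 y.2 + y.1 x.2)

/-- A linear map `J` on `ol(V) = gl(V) ⊕ V` is a generalized almost complex structure
(`J² = -id` and `J` preserves the pairing) iff it has the form
`J(A,u) = (-A∘D + π(u,·), D(u))` for some `D` with `D² = -id` and alternating bilinear
`π` with `π(Du, v) = π(u, Dv)`. -/
theorem stmt2 {V : Type*} [AddCommGroup V] [Module ℝ V]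
    (J : ((V →ₗ[ℝ] V) × V) →ₗ[ℝ] ((V →ₗ[ℝ] V) × V)) :
    ((∀ x, J (J x) = -x) ∧ (∀ x y, olPair (J x) (J y) = olPair x y))
      ↔ ∃ (D : V →ₗ[ℝ] V) (π : V →ₗ[ℝ] V →ₗ[ℝ] V),
          (∀ u, π u u = 0) ∧
          (∀ u, D (D u) = -u) ∧
          (∀ u v, π (D u) v = π u (D v)) ∧
          (∀ (A : V →ₗ[ℝ] V) (u : V), J (A, u) = (-(A ∘ₗ D) + π u, D u)) := by
  have half : ∀ z w : V, (2 : ℝ)⁻¹ • z = (2 : ℝ)⁻¹ • w → z = w := by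
    intro z w h
    have h2 := congrArg (fun t => (2 : ℝ) • t) h
    have e : (2 : ℝ) * 2⁻¹ = 1 := by norm_num
    simpa [smul_smul, e] using h2
  have key : ∀ a : V, a + a = 0 → a = 0 := by
    intro a h
    have h2 : (2 : ℝ) • a = 0 := by rw [two_smul]; exact h
    calc a = (2 : ℝ)⁻¹ • ((2 : ℝ) • a) := by rw [smul_smul]; norm_num
      _ = 0 := by rw [h2, smul_zero]
  constructor
  · rintro ⟨hsq, hp⟩
    set Dm : V →ₗ[ℝ] V :=
      (LinearMap.snd ℝ (V →ₗ[ℝ] V) V) ∘ₗ J ∘ₗ (LinearMap.inr ℝ (V →ₗ[ℝ] V) V) with hDm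
    set ψ : V →ₗ[ℝ] (V →ₗ[ℝ] V) :=
      (LinearMap.fst ℝ (V →ₗ[ℝ] V) V) ∘ₗ J ∘ₗ (LinearMap.inr ℝ (V →ₗ[ℝ] V) V) with hψ
    have Dapp : ∀ u : V, Dm u = (J (0, u)).2 := fun _ => rfl
    have ψapp : ∀ u : V, ψ u = (J (0, u)).1 := fun _ => rfl
    have hJform : ∀ (A : V →ₗ[ℝ] V) (u : V),
        J (A, u) = ((J (A, 0)).1 + ψ u, (J (A, 0)).2 + Dm u) := by
      intro A u
      have h : (A, u) = (A, (0 : V)) + ((0 : V →ₗ[ℝ] V), u) := by simp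
      rw [h, map_add]
      refine Prod.ext ?_ ?_ <;> simp [Dapp, ψapp]
    -- pairing relations
    have hpr : ∀ x y, (J x).1 (J y).2 + (J y).1 (J x).2 = x.1 y.2 + y.1 x.2 := by
      intro x y
      have h := hp x y
      unfold olPair at h
      exact half _ _ h
    have h1 : ∀ A B : V →ₗ[ℝ] V,
        (J (A, 0)).1 ((J (B, 0)).2) + (J (B, 0)).1 ((J (A, 0)).2) = 0 := by
      intro A B
      have h := hpr (A, (0 : V)) (B, (0 : V))
      simpa using h
    have h2 : ∀ (A : V →ₗ[ℝ] V) (v : V),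
        (J (A, 0)).1 (Dm v) + ψ v ((J (A, 0)).2) = A v := by
      intro A v
      have h := hpr (A, (0 : V)) ((0 : V →ₗ[ℝ] V), v)
      rw [Dapp, ψapp]
      simpa using h
    have h3 : ∀ u v : V, ψ u (Dm v) + ψ v (Dm u) = 0 := by
      intro u v
      have h := hpr ((0 : V →ₗ[ℝ] V), u) ((0 : V →ₗ[ℝ] V), v)
      rw [Dapp, Dapp, ψapp, ψapp]
      simpa using h
    -- square relations
    have h45 : ∀ A : V →ₗ[ℝ] V,
        ((J ((J (A, 0)).1, 0)).1 + ψ ((J (A, 0)).2),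
          (J ((J (A, 0)).1, 0)).2 + Dm ((J (A, 0)).2))
          = ((-A : V →ₗ[ℝ] V), (0 : V)) := by
      intro A
      rw [← hJform]
      simpa using hsq (A, (0 : V))
    have h4 : ∀ A : V →ₗ[ℝ] V,
        (J ((J (A, 0)).1, 0)).1 + ψ ((J (A, 0)).2) = -A :=
      fun A => congrArg Prod.fst (h45 A)
    have h5 : ∀ A : V →ₗ[ℝ] V,
        (J ((J (A, 0)).1, 0)).2 + Dm ((J (A, 0)).2) = 0 :=
      fun A => congrArg Prod.snd (h45 A)
    have h67 : ∀ u : V,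
        ((J (ψ u, 0)).1 + ψ (Dm u), (J (ψ u, 0)).2 + Dm (Dm u))
          = ((0 : V →ₗ[ℝ] V), -u) := by
      intro u
      rw [← hJform]
      have h := hsq ((0 : V →ₗ[ℝ] V), u)
      rw [ψapp, Dapp]
      simpa using h
    have h6 : ∀ u : V, (J (ψ u, 0)).1 + ψ (Dm u) = 0 :=
      fun u => congrArg Prod.fst (h67 u)
    have h7 : ∀ u : V, (J (ψ u, 0)).2 + Dm (Dm u) = -u :=
      fun u => congrArg Prod.snd (h67 u)
    -- Step 1: the gl-gl block is A ↦ -A ∘ D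
    have hPhi : ∀ B : V →ₗ[ℝ] V, (J (B, 0)).1 = -(B ∘ₗ Dm) := by
      intro B
      ext v
      have e2 := h2 ((J (B, 0)).1) v
      have e4 : (J ((J (B, 0)).1, 0)).1 = -B - ψ ((J (B, 0)).2) :=
        eq_sub_of_add_eq (h4 B)
      have e5 : (J ((J (B, 0)).1, 0)).2 = -(Dm ((J (B, 0)).2)) :=
        eq_neg_of_add_eq_zero_left (h5 B)
      rw [e4, e5] at e2
      have e3 := h3 ((J (B, 0)).2) v
      have step : (-B - ψ ((J (B, 0)).2)) (Dm v) + ψ v (-(Dm ((J (B, 0)).2)))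
          = -(B (Dm v)) - (ψ ((J (B, 0)).2) (Dm v) + ψ v (Dm ((J (B, 0)).2))) := by
        simp only [LinearMap.sub_apply, LinearMap.neg_apply, map_neg]
        abel
      rw [step, e3, sub_zero] at e2
      simp only [LinearMap.neg_apply, LinearMap.comp_apply]
      exact e2.symm
    have hPhiApp : ∀ (B : V →ₗ[ℝ] V) (x : V), (J (B, 0)).1 x = -(B (Dm x)) := by
      intro B x
      rw [hPhi]
      simp
    -- Step 2: D ∘ F = 0
    have hDF1 : Dm ((J ((1 : V →ₗ[ℝ] V), 0)).2) = 0 := by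
      have h := h1 1 1
      rw [hPhiApp] at h
      have h' := key _ h
      simpa using h'
    have hDF : ∀ A : V →ₗ[ℝ] V, Dm ((J (A, 0)).2) = 0 := by
      intro A
      have h := h1 A 1
      rw [hPhiApp, hPhiApp, hDF1] at h
      simp only [map_zero, neg_zero, zero_add, Module.End.one_apply] at h
      simpa using neg_eq_zero.mp h
    -- Step 3: ψ v (F A) = A (v + D (D v))
    have h8 : ∀ (A : V →ₗ[ℝ] V) (v : V),
        ψ v ((J (A, 0)).2) = A (v + Dm (Dm v)) := by
      intro A v
      have e2 := h2 A v
      rw [hPhiApp] at e2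
      have : ψ v ((J (A, 0)).2) = A v + A (Dm (Dm v)) := by
        rw [← e2]; abel
      rw [this, ← map_add]
    -- e := F 1
    have hDe : Dm ((J ((1 : V →ₗ[ℝ] V), 0)).2) = 0 := hDF 1
    have hg : ∀ v : V, ψ v ((J ((1 : V →ₗ[ℝ] V), 0)).2) = v + Dm (Dm v) := by
      intro v
      simpa using h8 1 v
    have hFψ : ∀ u : V,
        (J (ψ u, 0)).2 = -(ψ u ((J ((1 : V →ₗ[ℝ] V), 0)).2)) := by
      intro u
      have h := h7 u
      rw [hg]
      have : (J (ψ u, 0)).2 = -u - Dm (Dm u) := by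
        rw [← h]; abel
      rw [this]; abel
    have h9 : ∀ v : V, ψ v (ψ v ((J ((1 : V →ₗ[ℝ] V), 0)).2)) = 0 := by
      intro v
      have h := h8 (ψ v) v
      rw [hFψ, map_neg, ← hg v] at h
      refine key _ ?_
      nth_rewrite 1 [← h]
      abel
    have he : (J ((1 : V →ₗ[ℝ] V), 0)).2 = 0 := by
      have hge : ψ ((J ((1 : V →ₗ[ℝ] V), 0)).2) ((J ((1 : V →ₗ[ℝ] V), 0)).2)
          = (J ((1 : V →ₗ[ℝ] V), 0)).2 := by
        have h := hg ((J ((1 : V →ₗ[ℝ] V), 0)).2)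
        rw [hDe] at h
        simpa using h
      have h := h9 ((J ((1 : V →ₗ[ℝ] V), 0)).2)
      rw [hge] at h
      rw [← hge]; exact h
    have hDD : ∀ v : V, Dm (Dm v) = -v := by
      intro v
      have h := hg v
      rw [he] at h
      simp only [map_zero] at h
      exact eq_neg_of_add_eq_zero_right h.symm
    have hF0 : ∀ A : V →ₗ[ℝ] V, (J (A, 0)).2 = 0 := by
      intro A
      have h := hDD ((J (A, 0)).2)
      rw [hDF A, map_zero] at h
      exact (neg_eq_zero.mp h.symm)
    have hψD : ∀ u v : V, ψ (Dm u) v = ψ u (Dm v) := by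
      intro u v
      have h : ψ (Dm u) = -((J (ψ u, 0)).1) := eq_neg_of_add_eq_zero_right (h6 u)
      rw [h]
      simp [hPhiApp]
    have hskew : ∀ u v : V, ψ u v = -(ψ v u) := by
      intro u v
      have base : ∀ a b : V, ψ (Dm a) b = -(ψ b (Dm a)) := by
        intro a b
        rw [hψD]
        exact eq_neg_of_add_eq_zero_left (h3 a b)
      have h := base (Dm u) v
      rw [hDD u] at h
      simp only [map_neg, LinearMap.neg_apply, neg_neg] at h
      exact neg_eq_iff_eq_neg.mp h
    have hπ0 : ∀ u : V, ψ u u = 0 := by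
      intro u
      refine key _ ?_
      nth_rewrite 2 [hskew u u]
      abel
    refine ⟨Dm, ψ, hπ0, hDD, hψD, ?_⟩
    intro A u
    rw [hJform, hPhi A, hF0 A, zero_add]
  · rintro ⟨D, π, hπ0, hDD, hπD, hJ⟩
    have hskew : ∀ u v : V, π u v = -(π v u) := by
      intro u v
      have h0 := hπ0 (u + v)
      simp only [map_add, LinearMap.add_apply] at h0
      rw [hπ0, hπ0] at h0
      simp only [zero_add, add_zero] at h0
      exact eq_neg_of_add_eq_zero_right h0
    constructor
    · intro x
      obtain ⟨A, u⟩ := x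
      rw [hJ, hJ]
      refine Prod.ext ?_ ?_
      · ext v
        simp only [LinearMap.add_apply, LinearMap.neg_apply, LinearMap.comp_apply,
          Prod.fst_neg, hπD, hDD, map_neg]
        abel
      · simp [hDD]
    · intro x y
      obtain ⟨A, u⟩ := x
      obtain ⟨B, v⟩ := y
      rw [hJ, hJ]
      unfold olPair
      congr 1
      have hcross : π v (D u) = -(π u (D v)) := by
        rw [hskew v (D u), hπD]
      simp only [LinearMap.add_apply, LinearMap.neg_apply, LinearMap.comp_apply,
        hDD, map_neg, hcross]
      abel
end

section
/- Let V be a real vector space, D : V → V a linear map and π : V × V → V an alternating bilinear map such that D² = −id_V and π(D u, v) = π(u, D v) for all u, v ∈ V, and let J : gl(V) ⊕ V → gl(V) ⊕ V be the generalized almost complex structure J(A, u) = (−A∘D + π(u,·), D(u)). Then J satisfies the integrability condition ⟦J(x), J(y)⟧ − ⟦x, y⟧ − J(⟦J(x), y⟧ + ⟦x, J(y)⟧) = 0 for all x, y ∈ gl(V) ⊕ V (i.e. J is a generalized complex structure on ol(V)) if and only if (i) π satisfies the Jacobi identity π(u, π(v, w)) + π(v, π(w, u)) + π(w, π(u, v))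 = 0 for all u, v, w ∈ V (so π defines a Lie algebra structure on V), and (ii) D(π(u, v)) = π(u, D v) for all u, v ∈ V. -/
/-- The Dorfman bracket on the omni-Lie algebra `ol(V) = gl(V) ⊕ V`:
`⟦(A,u),(B,v)⟧ = ([A,B], A(v))`. -/
def olBr {V : Type*} [AddCommGroup V] [Module ℝ V]
    (x y : (V →ₗ[ℝ] V) × V) : (V →ₗ[ℝ] V) × V :=
  (x.1 ∘ₗ y.1 - y.1 ∘ₗ x.1, x.1 y.2)

/-- For a generalized almost complex structure `J(A,u) = (-A∘D + π(u,·), D(u))` on the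
omni-Lie algebra `ol(V)` (with `D² = -id`, `π` alternating bilinear, `π(Du,v) = π(u,Dv)`),
the integrability condition holds iff `π` satisfies the Jacobi identity and
`D(π(u,v)) = π(u, Dv)`. -/
theorem stmt3 {V : Type*} [AddCommGroup V] [Module ℝ V]
    (D : V →ₗ[ℝ] V) (π : V →ₗ[ℝ] V →ₗ[ℝ] V)
    (hD : ∀ u, D (D u) = -u)
    (hπalt : ∀ u, π u u = 0)
    (hπD : ∀ u v, π (D u) v = π u (D v))
    (J : ((V →ₗ[ℝ] V) × V) →ₗ[ℝ] ((V →ₗ[ℝ] V) × V))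
    (hJ : ∀ (A : V →ₗ[ℝ] V) (u : V), J (A, u) = (-(A ∘ₗ D) + π u, D u)) :
    (∀ x y, olBr (J x) (J y) - olBr x y - J (olBr (J x) y + olBr x (J y)) = 0)
      ↔ ((∀ u v w, π u (π v w) + π v (π w u) + π w (π u v) = 0) ∧
         (∀ u v, D (π u v) = π u (D v))) := by
  have hsk : ∀ a b : V, π a b = - π b a := by
    intro a b
    have h := hπalt (a + b)
    simp [map_add, hπalt] at h
    rw [add_comm] at h
    exact eq_neg_of_add_eq_zero_left h
  constructor
  · intro h
    constructor
    · intro u v w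
      have h1 := h (0, u) (0, v)
      simp [olBr, hJ, Prod.ext_iff] at h1
      have h2 := LinearMap.congr_fun h1.1 w
      simp at h2
      rw [hsk w u, hsk w (π u v)]
      simpa [sub_eq_add_neg] using h2
    · intro u v
      have h1 := h (0, u) (0, v)
      simp [olBr, hJ, Prod.ext_iff] at h1
      exact (sub_eq_zero.mp h1.2).symm
  · rintro ⟨hjac, hDπ⟩ ⟨A, u⟩ ⟨B, v⟩
    simp only [olBr, hJ]
    simp only [Prod.mk_add_mk, Prod.mk_sub_mk, hJ, Prod.ext_iff, Prod.fst_zero, Prod.snd_zero]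
    have h3 : ∀ w : V, π (π u v) w = π u (π v w) - π v (π u w) := by
      intro w
      have hj := hjac u v w
      rw [hsk w u, hsk w (π u v), map_neg] at hj
      have key : π u (π v w) - π v (π u w) - π (π u v) w = 0 := by
        simpa [sub_eq_add_neg, add_assoc] using hj
      exact (sub_eq_zero.mp key).symm
    constructor
    · ext w
      simp [hD, h3, ← hDπ]
      abel
    · simp [hD, hDπ]
end

section
/- Let V be a real vector space and J a generalized complex structure on the omni-Lie algebra ol(V). Write J(0, u) = (π♯(u), D(u)) for u ∈ V and set π(u, v) = π♯(u)(v). Then V carries the structure of a complex Lie algebra: there is a complex vector space structure on V extending the real one, with i•u = D(u), for which π is a complex-bilinear Lie bracket (π is alternating, satisfies the Jacobi identity, and π(D u, v) = π(u, D v) = D(π(u, v)) for all u, v ∈ V). -/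
/-- Given a generalized complex structure `J` on the omni-Lie algebra `ol(V)`, setting
`D(u) := (J(0,u)).2` and `π(u,v) := 2⟨J(0,u),(0,v)⟩`, the pair `(π, D)` makes `V` a
complex Lie algebra: `D` is real-linear with `D² = -id` (so it defines a complex vector
space structure with `i•u = D(u)`), `π` is bilinear, alternating, satisfies the Jacobi
identity, and `π(Du,v) = π(u,Dv) = D(π(u,v))` (complex bilinearity of the bracket). -/
theorem stmt4 {V : Type*} [AddCommGroup V] [Module ℝ V]
    (J : ((V →ₗ[ℝ] V) × V) →ₗ[ℝ] ((V →ₗ[ℝ] V) × V))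
    (hJ2 : ∀ x, J (J x) = -x)
    (hJpair : ∀ x y, olPair (J x) (J y) = olPair x y)
    (hJint : ∀ x y, olBr (J x) (J y) - olBr x y - J (olBr (J x) y + olBr x (J y)) = 0) :
    ∀ (D : V → V) (π : V → V → V),
      (D = fun u => (J (0, u)).2) →
      (π = fun u v => (2 : ℝ) • olPair (J (0, u)) (0, v)) →
      (∀ u v, D (u + v) = D u + D v) ∧
      (∀ (c : ℝ) (u : V), D (c • u) = c • D u) ∧
      (∀ u, D (D u) = -u) ∧
      (∀ u v w, π (u + v) w = π u w + π v w) ∧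
      (∀ (c : ℝ) (u v : V), π (c • u) v = c • π u v) ∧
      (∀ u v w, π u (v + w) = π u v + π u w) ∧
      (∀ (c : ℝ) (u v : V), π u (c • v) = c • π u v) ∧
      (∀ u, π u u = 0) ∧
      (∀ u v w, π u (π v w) + π v (π w u) + π w (π u v) = 0) ∧
      (∀ u v, π (D u) v = π u (D v)) ∧
      (∀ u v, π u (D v) = D (π u v)) := by
  intro D π hD hπ
  have hDdef : ∀ u, D u = (J (0, u)).2 := fun u => by rw [hD]
  have hπdef : ∀ u v, π u v = (J (0, u)).1 v := by
    intro u v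
    rw [hπ]
    show (2 : ℝ) • olPair (J (0, u)) (0, v) = _
    norm_num [olPair, smul_smul, smul_add]
  -- linearity of u ↦ J (0, u)
  have hadd : ∀ u v : V, J (0, u + v) = J (0, u) + J (0, v) := by
    intro u v
    rw [← map_add]
    congr 1
    simp [Prod.ext_iff]
  have hsmul : ∀ (c : ℝ) (u : V), J (0, c • u) = c • J (0, u) := by
    intro c u
    rw [← map_smul]
    congr 1
    simp [Prod.ext_iff]
  have half : ∀ a b : V, (2 : ℝ)⁻¹ • a = (2 : ℝ)⁻¹ • b → a = b := by
    intro a b hab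
    have h2 := congrArg (fun w => (2 : ℝ) • w) hab
    simpa [smul_smul, show (2 : ℝ) * 2⁻¹ = 1 by norm_num] using h2
  -- S1 : pairing identity
  have S1 : ∀ u v : V, (J (0, u)).1 ((J (0, v)).2) + (J (0, v)).1 ((J (0, u)).2) = 0 := by
    intro u v
    have h := hJpair ((0 : V →ₗ[ℝ] V), u) (0, v)
    simp only [olPair, LinearMap.zero_apply, add_zero, smul_zero, smul_eq_zero] at h
    rcases h with h | h
    · norm_num at h
    · exact h
  -- S2 : alternating
  have S2 : ∀ u : V, (J (0, u)).1 u = 0 := by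
    intro u
    have h := hJint ((0 : V →ₗ[ℝ] V), u) (J (0, u))
    rw [hJ2] at h
    have h1 : (J (0, u)).1 ((J (0, u)).2) = 0 := by
      have h2 : (2 : ℝ) • (J (0, u)).1 ((J (0, u)).2) = 0 := by
        rw [two_smul]; exact S1 u u
      simpa using h2
    simp only [olBr, Prod.fst_neg, Prod.snd_neg, LinearMap.zero_comp, LinearMap.comp_zero,
      sub_zero, zero_sub, LinearMap.zero_apply, h1, neg_zero, sub_self, Prod.mk_zero_zero,
      map_zero, map_neg, add_zero, Prod.ext_iff, neg_eq_zero] at h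
    have := h.2
    simpa using this
  -- S3 : antisymmetry
  have S3 : ∀ u v : V, (J (0, u)).1 v + (J (0, v)).1 u = 0 := by
    intro u v
    have h := S2 (u + v)
    rw [hadd] at h
    simp only [Prod.fst_add, LinearMap.add_apply, map_add, S2 u, S2 v, zero_add, add_zero] at h
    rw [add_comm] at h
    exact h
  -- S4 : main integrability identity
  have S4 : ∀ u v : V, J (0, (J (0, u)).1 v)
      = ((J (0, u)).1 ∘ₗ (J (0, v)).1 - (J (0, v)).1 ∘ₗ (J (0, u)).1,
          (J (0, u)).1 ((J (0, v)).2)) := by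
    intro u v
    have h := hJint ((0 : V →ₗ[ℝ] V), u) ((0 : V →ₗ[ℝ] V), v)
    simp only [olBr, LinearMap.zero_comp, LinearMap.comp_zero, LinearMap.zero_apply,
      sub_zero, zero_sub, sub_self, Prod.mk_zero_zero, add_zero, zero_add,
      Prod.mk_add_mk] at h
    -- h : X - 0 - J (0, (J(0,u)).1 v) = 0
    have h' := sub_eq_zero.mp h
    exact h'.symm
  have S4fst : ∀ u v : V, (J (0, (J (0, u)).1 v)).1
      = (J (0, u)).1 ∘ₗ (J (0, v)).1 - (J (0, v)).1 ∘ₗ (J (0, u)).1 := by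
    intro u v; rw [S4 u v]
  have S4snd : ∀ u v : V, (J (0, (J (0, u)).1 v)).2 = (J (0, u)).1 ((J (0, v)).2) := by
    intro u v; rw [S4 u v]
  -- now the identity-endomorphism computations
  -- T2 : (J (id, 0)).2 = 0
  have T1 : (J ((LinearMap.id : V →ₗ[ℝ] V), 0)).1 ((J ((LinearMap.id : V →ₗ[ℝ] V), 0)).2)
      = 0 := by
    have h := hJpair ((LinearMap.id : V →ₗ[ℝ] V), 0) ((LinearMap.id : V →ₗ[ℝ] V), 0)
    simp only [olPair, LinearMap.id_apply, map_zero, add_zero, smul_zero, smul_eq_zero] at h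
    rcases h with h | h
    · norm_num at h
    · have h2 : (2 : ℝ) • (J ((LinearMap.id : V →ₗ[ℝ] V), 0)).1
          ((J ((LinearMap.id : V →ₗ[ℝ] V), 0)).2) = 0 := by
        rw [two_smul]; exact h
      simpa using h2
  have T2 : (J ((LinearMap.id : V →ₗ[ℝ] V), 0)).2 = 0 := by
    have h := hJint ((LinearMap.id : V →ₗ[ℝ] V), 0) ((LinearMap.id : V →ₗ[ℝ] V), 0)
    simp only [olBr, LinearMap.comp_id, LinearMap.id_comp, sub_self, map_zero,
      LinearMap.id_apply, T1, Prod.mk_zero_zero, zero_add, zero_sub, sub_zero,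
      Prod.mk_add_mk, add_zero, neg_eq_zero] at h
    have h2 := hJ2 ((0 : V →ₗ[ℝ] V), (J ((LinearMap.id : V →ₗ[ℝ] V), 0)).2)
    rw [h, map_zero] at h2
    have h3 := neg_eq_zero.mp h2.symm
    simpa using congrArg Prod.snd h3
  -- T3 : (J (id,0)).1 is a left inverse of D
  have T3 : ∀ u : V, (J ((LinearMap.id : V →ₗ[ℝ] V), 0)).1 ((J (0, u)).2) = u := by
    intro u
    have h := hJpair ((0 : V →ₗ[ℝ] V), u) ((LinearMap.id : V →ₗ[ℝ] V), 0)
    simp only [olPair, T2, map_zero, LinearMap.zero_apply, LinearMap.id_apply,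
      zero_add, add_zero] at h
    exact half _ _ h
  -- injectivity of D
  have Dinj : ∀ u : V, (J (0, u)).2 = 0 → u = 0 := by
    intro u hu
    have := T3 u
    rw [hu, map_zero] at this
    exact this.symm
  -- T4 : (J (id,0)).1 = -D
  have T4 : ∀ v : V, (J ((LinearMap.id : V →ₗ[ℝ] V), 0)).1 v = -((J (0, v)).2) := by
    intro v
    have h := hJint ((LinearMap.id : V →ₗ[ℝ] V), 0) ((0 : V →ₗ[ℝ] V), v)
    simp only [olBr, LinearMap.comp_id, LinearMap.id_comp, LinearMap.zero_comp,
      LinearMap.comp_zero, sub_self, sub_zero, zero_sub, LinearMap.zero_apply,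
      LinearMap.id_apply, map_zero, Prod.mk_zero_zero, add_zero, zero_add,
      Prod.mk_add_mk, T3 v] at h
    have h2 := congrArg Prod.snd h
    simp only [Prod.snd_sub, Prod.snd_zero, sub_self, zero_sub, neg_eq_zero] at h2
    exact eq_neg_of_add_eq_zero_left (Dinj _ h2)
  -- D squares to -1
  have DD : ∀ u : V, (J (0, (J (0, u)).2)).2 = -u := by
    intro u
    have h := T3 u
    rw [T4 ((J (0, u)).2)] at h
    exact neg_eq_iff_eq_neg.mp h
  -- now prove all eleven statements
  refine ⟨?_, ?_, ?_, ?_, ?_, ?_, ?_, ?_, ?_, ?_, ?_⟩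
  · intro u v
    simp [hDdef, hadd]
  · intro c u
    simp [hDdef, hsmul]
  · intro u
    rw [hDdef, hDdef]
    exact DD u
  · intro u v w
    simp [hπdef, hadd]
  · intro c u v
    simp [hπdef, hsmul]
  · intro u v w
    simp [hπdef]
  · intro c u v
    simp [hπdef]
  · intro u
    rw [hπdef]
    exact S2 u
  · intro u v w
    simp only [hπdef]
    have e1 : (J (0, (J (0, u)).1 v)).1 w
        = (J (0, u)).1 ((J (0, v)).1 w) - (J (0, v)).1 ((J (0, u)).1 w) := by
      rw [S4fst u v]
      simp
    have e2 : (J (0, w)).1 ((J (0, u)).1 v) = -((J (0, (J (0, u)).1 v)).1 w) := by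
      exact eq_neg_of_add_eq_zero_right (S3 ((J (0, u)).1 v) w)
    have e3 : (J (0, v)).1 ((J (0, w)).1 u) = -((J (0, v)).1 ((J (0, u)).1 w)) := by
      rw [eq_neg_of_add_eq_zero_left (S3 w u), map_neg]
    rw [e2, e1, e3]
    abel
  · intro u v
    rw [hπdef, hπdef, hDdef, hDdef]
    have h1 := S3 ((J (0, u)).2) v
    have h2 := S1 u v
    exact (eq_neg_of_add_eq_zero_left h1).trans (eq_neg_of_add_eq_zero_left h2).symm
  · intro u v
    rw [hπdef, hπdef, hDdef, hDdef]
    exact (S4snd u v).symm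
end

section
/- Let V be a real vector space and J a generalized complex structure on the omni-Lie algebra ol(V). Define π : V × V → V by π(u, v) = 2⟨J(0, u), (0, v)⟩, i.e. π(u,v) is the gl(V)-component of J(0,u) evaluated at v. Then π is a Lie bracket on V: it is bilinear, alternating, and satisfies the Jacobi identity. -/
/-- Given a generalized complex structure `J` on the omni-Lie algebra `ol(V)`, the map
`π(u,v) = 2⟨J(0,u),(0,v)⟩` is a Lie bracket on `V`: bilinear, alternating, and
satisfying the Jacobi identity. -/
theorem stmt11 {V : Type*} [AddCommGroup V] [Module ℝ V]
    (J : ((V →ₗ[ℝ] V) × V) →ₗ[ℝ] ((V →ₗ[ℝ] V) × V))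
    (hJ2 : ∀ x, J (J x) = -x)
    (hJpair : ∀ x y, olPair (J x) (J y) = olPair x y)
    (hJint : ∀ x y, olBr (J x) (J y) - olBr x y - J (olBr (J x) y + olBr x (J y)) = 0) :
    ∀ π : V → V → V,
      (π = fun u v => (2 : ℝ) • olPair (J (0, u)) (0, v)) →
      (∀ u v w, π (u + v) w = π u w + π v w) ∧
      (∀ (c : ℝ) (u v : V), π (c • u) v = c • π u v) ∧
      (∀ u v w, π u (v + w) = π u v + π u w) ∧
      (∀ (c : ℝ) (u v : V), π u (c • v) = c • π u v) ∧
      (∀ u, π u u = 0) ∧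
      (∀ u v w, π u (π v w) + π v (π w u) + π w (π u v) = 0) := by
  intro π hπ
  have key : ∀ u v : V, π u v = (J (0, u)).1 v := by
    intro u v
    simp only [hπ, olPair]
    show (2 : ℝ) • ((2 : ℝ)⁻¹ • ((J (0, u)).1 v +
      ((0 : V →ₗ[ℝ] V) : V →ₗ[ℝ] V) (J (0, u)).2)) = _
    simp [smul_smul]
  -- skew symmetry
  have skew : ∀ u v : V, π u v = - π v u := by
    intro u v
    have h := hJpair (0, u) (J (0, v))
    rw [hJ2] at h
    simp only [olPair] at h
    have h2 : ((J (0, u)).1 (-(0, v) : (V →ₗ[ℝ] V) × V).2 +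
        (-(0, v) : (V →ₗ[ℝ] V) × V).1 (J (0, u)).2) =
        (((0, u) : (V →ₗ[ℝ] V) × V).1 (J (0, v)).2 + (J (0, v)).1 u) := by
      have := congrArg (fun z => (2 : ℝ) • z) h
      simpa [smul_smul] using this
    simp only [Prod.fst_neg, Prod.snd_neg, LinearMap.neg_apply, LinearMap.zero_apply,
      map_neg, zero_add, add_zero] at h2
    rw [key u v, key v u]
    rw [← h2]
    abel
  -- the structural identity from integrability
  have hbr : ∀ u v : V, J (0, (J (0, u)).1 v) =
      ((J (0, u)).1 ∘ₗ (J (0, v)).1 - (J (0, v)).1 ∘ₗ (J (0, u)).1,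
        (J (0, u)).1 (J (0, v)).2) := by
    intro u v
    have h := hJint (0, u) (0, v)
    simp only [olBr, LinearMap.comp_zero, LinearMap.zero_comp, LinearMap.zero_apply,
      sub_zero, sub_self, zero_add, add_zero, Prod.mk_add_mk, Prod.mk_sub_mk] at h
    have h' := sub_eq_zero.mp h
    exact h'.symm
  have jac : ∀ u v w : V, π (π u v) w = π u (π v w) - π v (π u w) := by
    intro u v w
    have h := congrArg (fun p : (V →ₗ[ℝ] V) × V => p.1 w) (hbr u v)
    simp only [LinearMap.sub_apply, LinearMap.comp_apply] at h
    rw [key (π u v) w, key u v, h, key u (π v w), key v (π u w), key v w, key u w]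
  refine ⟨?_, ?_, ?_, ?_, ?_, ?_⟩
  · intro u v w
    have : ((0, u + v) : (V →ₗ[ℝ] V) × V) = (0, u) + (0, v) := by
      simp [Prod.ext_iff]
    rw [key, key, key, this, map_add]
    simp
  · intro c u v
    have : ((0, c • u) : (V →ₗ[ℝ] V) × V) = c • (0, u) := by
      simp [Prod.ext_iff]
    rw [key, key, this, map_smul]
    simp
  · intro u v w
    rw [key, key, key, map_add]
  · intro c u v
    rw [key, key, map_smul]
  · intro u
    have h := skew u u
    have h2 : (2 : ℝ) • π u u = 0 := by
      rw [two_smul]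
      nth_rewrite 1 [h]
      abel
    rcases smul_eq_zero.mp h2 with h3 | h3
    · norm_num at h3
    · exact h3
  · intro u v w
    have h1 := jac u v w
    have h2 : π w (π u v) = - π (π u v) w := skew w (π u v)
    have h3 : π v (π w u) = - π v (π u w) := by
      rw [skew w u, key v, map_neg, ← key v]
    rw [h2, h1, h3]
    abel
end

section
/- Let V be a real vector space and D : V → V a linear map with D² = −id_V. Then the linear map J : gl(V) ⊕ V → gl(V) ⊕ V defined by J(A, u) = (A∘D, −D(u)) is a generalized complex structure on the omni-Lie algebra ol(V). -/
/-- For a linear map `D : V → V` with `D² = -id`, the linear map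
`J(A,u) = (A∘D, -D(u))` is a generalized complex structure on the omni-Lie algebra
`ol(V)`: `J² = -id`, `J` preserves the pairing, and `J` is integrable. -/
theorem stmt12 {V : Type*} [AddCommGroup V] [Module ℝ V]
    (D : V →ₗ[ℝ] V) (hD : ∀ u, D (D u) = -u)
    (J : ((V →ₗ[ℝ] V) × V) →ₗ[ℝ] ((V →ₗ[ℝ] V) × V))
    (hJ : ∀ (A : V →ₗ[ℝ] V) (u : V), J (A, u) = (A ∘ₗ D, -(D u))) :
    (∀ x, J (J x) = -x) ∧
    (∀ x y, olPair (J x) (J y) = olPair x y) ∧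
    (∀ x y, olBr (J x) (J y) - olBr x y - J (olBr (J x) y + olBr x (J y)) = 0) := by
  refine ⟨?_, ?_, ?_⟩
  · rintro ⟨A, u⟩
    rw [hJ, hJ]
    refine Prod.ext ?_ ?_
    · ext v
      simp [hD v]
    · simp [hD u]
  · rintro ⟨A, u⟩ ⟨B, v⟩
    rw [hJ, hJ]
    simp only [olPair]
    simp [hD]
  · rintro ⟨A, u⟩ ⟨B, v⟩
    rw [hJ, hJ]
    simp only [olBr]
    rw [hJ]
    refine Prod.ext ?_ ?_
    · ext w
      simp [hD]
      abel
    · simp [hD]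
end
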